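/- arXiv:1510.05679 — 5 statements merged into one kernel-verified Lean document; each statement's English description precedes it below -/
import Mathlib

section
/- Let G be a compact topological group acting continuously on a Hausdorff topological space X, and let A, B be countable subsets of X. Then there exists g ∈ G with g·A = B if and only if there is a bijection σ : A → B such that for every finite tuple (a_1,...,a_n) of elements of A there exists g ∈ G with g·a_i = σ(a_i) for all i. -/
/-!
A group element carrying `A` onto `B` through `σ` is a point of `⋂ a, {g | g • a = σ a}`.
Each of these sets is closed because points of `X` are closed and the action is continuous,
and the tuple hypothesis says exactly that the family has the finite intersection property,
so compactness of `G` makes the intersection nonempty.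
-/

open Set

section FiniteIntersection

variable {G X ι : Type*} [TopologicalSpace G] [TopologicalSpace X] [T1Space X] [SMul G X]
  [ContinuousSMul G X]

theorem isClosed_setOf_smul_eq (x y : X) : IsClosed {g : G | g • x = y} :=
  isClosed_singleton.preimage (continuous_id.smul continuous_const)

variable [CompactSpace G]

theorem exists_forall_smul_eq_of_forall_finset (x y : ι → X)
    (h : ∀ u : Finset ι, ∃ g : G, ∀ i ∈ u, g • x i = y i) : ∃ g : G, ∀ i, g • x i = y i := by
  obtain ⟨g, -, hg⟩ := isCompact_univ.inter_iInter_nonempty (fun i => {g : G | g • x i = y i})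
    (fun i => isClosed_setOf_smul_eq (x i) (y i)) fun u => by
      obtain ⟨g, hg⟩ := h u
      exact ⟨g, trivial, mem_iInter₂.2 hg⟩
  exact ⟨g, mem_iInter.1 hg⟩

theorem exists_forall_smul_eq_of_forall_tuple (x y : ι → X)
    (h : ∀ (n : ℕ) (t : Fin n → ι), ∃ g : G, ∀ k, g • x (t k) = y (t k)) :
    ∃ g : G, ∀ i, g • x i = y i := by
  refine exists_forall_smul_eq_of_forall_finset x y fun u => ?_
  obtain ⟨g, hg⟩ := h u.card fun k => u.equivFin.symm k
  refine ⟨g, fun i hi => ?_⟩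
  simpa using hg (u.equivFin ⟨i, hi⟩)

end FiniteIntersection

theorem image_smul_eq_of_forall_smul_eq {G X : Type*} [SMul G X] {A B : Set X} (σ : A ≃ B)
    {g : G} (hg : ∀ a : A, g • (a : X) = σ a) : (fun a => g • a) '' A = B := by
  rw [image_eq_range, funext hg]
  exact (σ.surjective.range_comp Subtype.val).trans Subtype.range_coe

theorem stmt1_general {G X : Type*} [Group G] [TopologicalSpace G]
    [CompactSpace G] [TopologicalSpace X] [T2Space X] [MulAction G X] [ContinuousSMul G X]
    (A B : Set X) :
    (∃ g : G, (fun a => g • a) '' A = B) ↔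
      ∃ σ : A ≃ B, ∀ (n : ℕ) (t : Fin n → A),
        ∃ g : G, ∀ i, g • (t i : X) = ((σ (t i) : B) : X) := by
  constructor
  · rintro ⟨g, rfl⟩
    exact ⟨Equiv.Set.image _ A (MulAction.injective g), fun _ _ => ⟨g, fun _ => rfl⟩⟩
  · rintro ⟨σ, hσ⟩
    obtain ⟨g, hg⟩ := exists_forall_smul_eq_of_forall_tuple (G := G) Subtype.val
      (fun a => (σ a : X)) hσ
    exact ⟨g, image_smul_eq_of_forall_smul_eq σ hg⟩

/-- For a compact topological group acting continuously on a Hausdorff space, and countable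
subsets `A`, `B`: some `g` carries `A` onto `B` iff there is a bijection `σ : A → B` such that
every finite tuple from `A` is carried to its `σ`-image by some group element. -/
theorem stmt1 {G X : Type*} [Group G] [TopologicalSpace G] [IsTopologicalGroup G]
    [CompactSpace G] [TopologicalSpace X] [T2Space X] [MulAction G X] [ContinuousSMul G X]
    (A B : Set X) (hA : A.Countable) (hB : B.Countable) :
    (∃ g : G, (fun a => g • a) '' A = B) ↔
      ∃ σ : A ≃ B, ∀ (n : ℕ) (t : Fin n → A),
        ∃ g : G, ∀ i, g • (t i : X) = ((σ (t i) : B) : X) :=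
  stmt1_general A B
end

section
/- Let S ⊆ 2^ω be the eventually-zero sequences, fix a bijection c : S → ℕ∖{0}, and for a countable set I ⊆ 2^ω ∖ S define the structure M_I in the language {E_n : n ∈ ω} with universe {(η,n) : η ∈ S, n < c(η)} ∪ (I × ω), where (η_1,n_1) E_m (η_2,n_2) iff η_1↾m = η_2↾m. Then for countable I, J ⊆ 2^ω ∖ S, M_I ≅ M_J if and only if I = J. -/
/-- The eventually-zero sequences in Cantor space. -/
def evZero : Set (ℕ → Bool) := {η | ∃ N, ∀ n, N ≤ n → η n = false}

/-- The universe of the structure `M_I`: pairs `(η, n)` with `η ∈ S` (eventually zero) and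
`n < c(η)`, together with `I × ω`. -/
def univM (c : evZero → ℕ) (I : Set (ℕ → Bool)) : Set ((ℕ → Bool) × ℕ) :=
  {p | (∃ h : p.1 ∈ evZero, p.2 < c ⟨p.1, h⟩) ∨ p.1 ∈ I}

/-!
An isomorphism preserves every `E_m`, hence the intersection `E_∞` (equality of first
coordinates), so it maps `E_∞`-classes bijectively onto `E_∞`-classes. Over `η ∈ S` the class
has exactly `c η` elements and over `η ∈ I` it is infinite; since `c` is injective and nonzero,
the isomorphism fixes the first coordinate of every element over `S`. An element over `η ∈ I`
is `E_m`-equivalent to the element over the truncation `η↾m ⁀ 0^ω ∈ S`, which is fixed, so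
its image lies over a sequence agreeing with `η` on every prefix, i.e. over `η` itself;
thus `η ∈ J`.
-/

section PrefixAgreement

variable {α β : Type*} {X Y : Set ((ℕ → α) × β)}

def PreservesE (f : X ≃ Y) : Prop :=
  ∀ (p q : X) (m : ℕ), (∀ k < m, p.1.1 k = q.1.1 k) ↔ (∀ k < m, (f p).1.1 k = (f q).1.1 k)

theorem eq_iff_forall_prefix {η τ : ℕ → α} : η = τ ↔ ∀ m, ∀ k < m, η k = τ k :=
  ⟨fun h _ _ _ => h ▸ rfl, fun h => funext fun k => h (k + 1) k k.lt_succ_self⟩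

namespace PreservesE

variable {f : X ≃ Y}

theorem symm (hf : PreservesE f) : PreservesE f.symm := fun p q m => by
  simpa only [Equiv.apply_symm_apply] using (hf (f.symm p) (f.symm q) m).symm

theorem fst_eq_iff (hf : PreservesE f) (p q : X) : (f p).1.1 = (f q).1.1 ↔ p.1.1 = q.1.1 := by
  simp only [eq_iff_forall_prefix, hf p q]

def fiberEquiv (hf : PreservesE f) (p : X) :
    {q : X // q.1.1 = p.1.1} ≃ {r : Y // r.1.1 = (f p).1.1} :=
  f.subtypeEquiv fun q => (hf.fst_eq_iff q p).symm

theorem natCard_fiber_eq (hf : PreservesE f) (p : X) :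
    Nat.card {q : X // q.1.1 = p.1.1} = Nat.card {r : Y // r.1.1 = (f p).1.1} :=
  Nat.card_congr (hf.fiberEquiv p)

end PreservesE

end PrefixAgreement

def truncate (η : ℕ → Bool) (m : ℕ) : ℕ → Bool := fun k => if k < m then η k else false

theorem truncate_mem_evZero (η : ℕ → Bool) (m : ℕ) : truncate η m ∈ evZero :=
  ⟨m, fun _ hn => if_neg (Nat.not_lt.mpr hn)⟩

theorem truncate_apply_of_lt (η : ℕ → Bool) {m k : ℕ} (hk : k < m) :
    truncate η m k = η k :=
  if_pos hk

section Fibers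

variable {c : evZero → ℕ} {I : Set (ℕ → Bool)}

theorem natCard_fiber_of_mem_evZero {η : ℕ → Bool} (hη : η ∈ evZero) (hηI : η ∉ I) :
    Nat.card {q : univM c I // q.1.1 = η} = c ⟨η, hη⟩ := by
  rw [← Nat.card_fin (c ⟨η, hη⟩)]
  refine Nat.card_congr
    { toFun := fun q => ⟨q.1.1.2, ?_⟩
      invFun := fun k => ⟨⟨(η, k), Or.inl ⟨hη, k.2⟩⟩, rfl⟩
      left_inv := fun q => Subtype.ext <| Subtype.ext <| Prod.ext q.2.symm rfl
      right_inv := fun _ => rfl }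
  obtain ⟨⟨⟨τ, n⟩, hmem⟩, rfl : τ = η⟩ := q
  rcases hmem with ⟨_, hn⟩ | hτI
  · exact hn
  · exact absurd hτI hηI

theorem natCard_fiber_of_mem {η : ℕ → Bool} (hη : η ∈ I) :
    Nat.card {q : univM c I // q.1.1 = η} = 0 := by
  have : Infinite {q : univM c I // q.1.1 = η} :=
    Infinite.of_injective (fun n => ⟨⟨(η, n), Or.inr hη⟩, rfl⟩) fun _ _ h =>
      congrArg (fun q : {q : univM c I // q.1.1 = η} => q.1.1.2) h
  exact Nat.card_eq_zero_of_infinite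

end Fibers

section Isomorphism

variable {c : evZero → ℕ} {I J : Set (ℕ → Bool)} {f : univM c I ≃ univM c J}

theorem PreservesE.fst_apply_of_mem_evZero (hc0 : ∀ η, c η ≠ 0) (hcinj : Function.Injective c)
    (hIS : ∀ η ∈ I, η ∉ evZero) (hJS : ∀ η ∈ J, η ∉ evZero) (hf : PreservesE f)
    (p : univM c I) (hp : p.1.1 ∈ evZero) : (f p).1.1 = p.1.1 := by
  have hcard := hf.natCard_fiber_eq p
  rw [natCard_fiber_of_mem_evZero hp fun h => hIS _ h hp] at hcard
  rcases (f p).2 with ⟨hσ, -⟩ | hσJ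
  · rw [natCard_fiber_of_mem_evZero hσ fun h => hJS _ h hσ] at hcard
    exact congrArg Subtype.val (hcinj hcard).symm
  · exact absurd (hcard.trans (natCard_fiber_of_mem hσJ)) (hc0 _)

theorem PreservesE.subset (hc0 : ∀ η, c η ≠ 0) (hcinj : Function.Injective c)
    (hIS : ∀ η ∈ I, η ∉ evZero) (hJS : ∀ η ∈ J, η ∉ evZero) (hf : PreservesE f) :
    I ⊆ J := by
  intro η hη
  let p : univM c I := ⟨(η, 0), Or.inr hη⟩
  have hfix : (f p).1.1 = η := by
    refine eq_iff_forall_prefix.mpr fun m => ?_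
    let q : univM c I :=
      ⟨(truncate η m, 0), Or.inl ⟨truncate_mem_evZero η m, Nat.pos_of_ne_zero (hc0 _)⟩⟩
    have hpq : ∀ k < m, p.1.1 k = q.1.1 k := fun k hk => (truncate_apply_of_lt η hk).symm
    have hq : (f q).1.1 = truncate η m :=
      hf.fst_apply_of_mem_evZero hc0 hcinj hIS hJS q (truncate_mem_evZero η m)
    intro k hk
    rw [(hf p q m).mp hpq k hk, hq, truncate_apply_of_lt η hk]
  rcases (f p).2 with ⟨hS, -⟩ | hJ
  · exact absurd (hfix ▸ hS) (hIS η hη)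
  · exact hfix ▸ hJ

end Isomorphism

theorem stmt7_general (c : evZero → ℕ) (hc0 : ∀ η, c η ≠ 0) (hcinj : Function.Injective c)
    (I J : Set (ℕ → Bool))
    (hIS : ∀ η ∈ I, η ∉ evZero) (hJS : ∀ η ∈ J, η ∉ evZero) :
    (∃ f : ↥(univM c I) ≃ ↥(univM c J),
        ∀ (p q : ↥(univM c I)) (m : ℕ),
          (∀ k < m, p.1.1 k = q.1.1 k) ↔ (∀ k < m, (f p).1.1 k = (f q).1.1 k)) ↔
      I = J := by
  constructor
  · rintro ⟨f, hf : PreservesE f⟩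
    exact (hf.subset hc0 hcinj hIS hJS).antisymm (hf.symm.subset hc0 hcinj hJS hIS)
  · rintro rfl
    exact ⟨Equiv.refl _, fun _ _ _ => Iff.rfl⟩

/-- For countable `I, J ⊆ 2^ω ∖ S`, the structures `M_I`, `M_J` (with `(η₁,n₁) E_m (η₂,n₂)`
iff `η₁↾m = η₂↾m`) are isomorphic iff `I = J`. -/
theorem stmt7 (c : evZero → ℕ) (hc0 : ∀ η, c η ≠ 0) (hcinj : Function.Injective c)
    (hcsurj : ∀ n : ℕ, n ≠ 0 → ∃ η, c η = n)
    (I J : Set (ℕ → Bool)) (hI : I.Countable) (hJ : J.Countable)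
    (hIS : ∀ η ∈ I, η ∉ evZero) (hJS : ∀ η ∈ J, η ∉ evZero) :
    (∃ f : ↥(univM c I) ≃ ↥(univM c J),
        ∀ (p q : ↥(univM c I)) (m : ℕ),
          (∀ k < m, p.1.1 k = q.1.1 k) ↔ (∀ k < m, (f p).1.1 k = (f q).1.1 k)) ↔
      I = J :=
  stmt7_general c hc0 hcinj I J hIS hJS
end

section
/- Define an L-structure M_X for each countable subset X ⊆ 2^ω as follows, with L = {E_n : n ∈ ω}: the universe is X × ω, and (η,i) E_n (τ,j) iff η↾n = τ↾n. If X, Y ⊆ 2^ω are countable and every point of X is an accumulation point of X (and similarly for Y), then M_X ≅ M_Y if and only if there is a bijection f : X → Y such that for all η, τ ∈ X and all n, η↾n = τ↾n iff f(η)↾n = f(τ)↾n. -/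
/-! Since `η = τ` iff `η↾n = τ↾n` for every `n`, an isomorphism `M_X ≅ M_Y` maps each fibre
`{η} × ω` onto a fibre `{τ} × ω`, so it descends to the required bijection `X ≃ Y`; conversely
such a bijection lifts to `M_X ≅ M_Y` by acting trivially on the second coordinate. -/

theorem eq_iff_forall_forall_lt_eq {α : Type*} {η τ : ℕ → α} :
    η = τ ↔ ∀ n, ∀ k < n, η k = τ k :=
  ⟨fun h _ _ _ => h ▸ rfl, fun h => funext fun k => h (k + 1) k k.lt_succ_self⟩

namespace Equiv

variable {A B C : Type*}

noncomputable def ofFiberwise (f : A × C ≃ B × C) (hf : ∀ p q, p.1 = q.1 ↔ (f p).1 = (f q).1)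
    (c : C) : A ≃ B :=
  Equiv.ofBijective (fun a => (f (a, c)).1) <| by
    refine ⟨fun a a' h => (hf (a, c) (a', c)).mpr h, fun b => ⟨(f.symm (b, c)).1, ?_⟩⟩
    simpa using (hf ((f.symm (b, c)).1, c) (f.symm (b, c))).mp rfl

end Equiv

theorem stmt8_general (X Y : Set (ℕ → Bool)) :
    (∃ f : ↥X × ℕ ≃ ↥Y × ℕ,
        ∀ (p q : ↥X × ℕ) (n : ℕ),
          (∀ k < n, p.1.1 k = q.1.1 k) ↔ (∀ k < n, (f p).1.1 k = (f q).1.1 k)) ↔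
      (∃ g : ↥X ≃ ↥Y,
        ∀ (η τ : ↥X) (n : ℕ),
          (∀ k < n, η.1 k = τ.1 k) ↔ (∀ k < n, (g η).1 k = (g τ).1 k)) := by
  constructor
  · rintro ⟨f, hf⟩
    have hfiber : ∀ p q, p.1 = q.1 ↔ (f p).1 = (f q).1 := fun p q => by
      simp only [Subtype.ext_iff, eq_iff_forall_forall_lt_eq, hf p q]
    exact ⟨Equiv.ofFiberwise f hfiber 0, fun η τ => hf (η, 0) (τ, 0)⟩
  · rintro ⟨g, hg⟩
    exact ⟨g.prodCongr (Equiv.refl ℕ), fun p q => hg p.1 q.1⟩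

/-- For countable `X, Y ⊆ 2^ω` each consisting entirely of accumulation points of itself,
the structures `M_X`, `M_Y` on `X × ω`, `Y × ω` (with `(η,i) E_n (τ,j)` iff `η↾n = τ↾n`)
are isomorphic iff there is a bijection `f : X → Y` preserving the lengths of common
initial segments. -/
theorem stmt8 (X Y : Set (ℕ → Bool)) (hX : X.Countable) (hY : Y.Countable)
    (haccX : ∀ η ∈ X, η ∈ closure (X \ {η})) (haccY : ∀ η ∈ Y, η ∈ closure (Y \ {η})) :
    (∃ f : ↥X × ℕ ≃ ↥Y × ℕ,
        ∀ (p q : ↥X × ℕ) (n : ℕ),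
          (∀ k < n, p.1.1 k = q.1.1 k) ↔ (∀ k < n, (f p).1.1 k = (f q).1.1 k)) ↔
      (∃ g : ↥X ≃ ↥Y,
        ∀ (η τ : ↥X) (n : ℕ),
          (∀ k < n, η.1 k = τ.1 k) ↔ (∀ k < n, (g η).1 k = (g τ).1 k)) :=
  stmt8_general X Y
end

section
/- Fix the theory K-coding: for each countable X ⊆ 2^ω define a structure M_X whose sort U is A ∪ X with A a fixed countably infinite set disjoint from 2^ω, and where data assigns to each pair (u, c̅) with u ∈ U and c̅ a finite binary string a dimension d(u,c̅) ∈ ℕ, with d(a,c̅) = 1 for a ∈ A and d(x,c̅) = x(|c̅|) + 2 for x ∈ X. Then for countable X, Y ⊆ 2^ω, there is a bijection f : U_X → U_Y with d(u,c̅) = d(f(u),c̅) for all u and c̅ if and only if X = Y. -/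
/-- The dimension function of the coding structure `M_X` for the Koerwien theory: the sort
`U` is `A ∪ X` (with `A` a fixed countably infinite set, here a copy of `ℕ`, disjoint from
`2^ω`), elements of `A` have dimension `1` on every binary string, and `x ∈ X` has dimension
`x(|c̅|) + 2` on the string `c̅`. -/
def dimFn (X : Set (ℕ → Bool)) : (ℕ ⊕ ↥X) → List Bool → ℕ
  | Sum.inl _, _ => 1
  | Sum.inr x, c => (if x.1 c.length then 1 else 0) + 2

theorem exists_eq_inr_of_dimFn_inr_eq {X Y : Set (ℕ → Bool)} {x : X} {v : ℕ ⊕ Y}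
    (h : ∀ c, dimFn X (.inr x) c = dimFn Y v c) : ∃ y : Y, v = .inr y ∧ (y : ℕ → Bool) = x := by
  rcases v with n | y
  · have := h []
    simp only [dimFn] at this
    omega
  · refine ⟨y, rfl, funext fun n => ?_⟩
    have := h (List.replicate n true)
    cases hx : x.1 n <;> cases hy : y.1 n <;> simp_all [dimFn]

theorem subset_of_dimFn_comp_eq {X Y : Set (ℕ → Bool)} (f : ℕ ⊕ X → ℕ ⊕ Y)
    (hf : ∀ u c, dimFn X u c = dimFn Y (f u) c) : X ⊆ Y := fun z hz => by
  obtain ⟨y, -, hyz⟩ := exists_eq_inr_of_dimFn_inr_eq (hf (.inr ⟨z, hz⟩))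
  simpa [hyz] using y.2

theorem stmt15_general (X Y : Set (ℕ → Bool)) :
    (∃ f : (ℕ ⊕ ↥X) ≃ (ℕ ⊕ ↥Y),
        ∀ (u : ℕ ⊕ ↥X) (c : List Bool), dimFn X u c = dimFn Y (f u) c) ↔ X = Y := by
  constructor
  · rintro ⟨f, hf⟩
    refine (subset_of_dimFn_comp_eq f hf).antisymm (subset_of_dimFn_comp_eq f.symm fun u c => ?_)
    simpa using (hf (f.symm u) c).symm
  · rintro rfl
    exact ⟨Equiv.refl _, fun _ _ => rfl⟩

/-- For countable `X, Y ⊆ 2^ω`, there is a dimension-preserving bijection of the sorts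
`U_X = A ∪ X` and `U_Y = A ∪ Y` iff `X = Y`. -/
theorem stmt15 (X Y : Set (ℕ → Bool)) (hX : X.Countable) (hY : Y.Countable) :
    (∃ f : (ℕ ⊕ ↥X) ≃ (ℕ ⊕ ↥Y),
        ∀ (u : ℕ ⊕ ↥X) (c : List Bool), dimFn X u c = dimFn Y (f u) c) ↔ X = Y :=
  stmt15_general X Y
end

section
/- Let λ be an infinite cardinal and call a subtree S ⊆ λ^{<ω} reasonable if for every s ∈ S the set {α < λ : s⌢(α) ∉ S} is infinite. Let I ⊆ λ^ω be the eventually-zero sequences, and for a subtree S define M_S = (I × {0}) ∪ {(η,1) : η ∈ λ^ω and t⌢(1) ⊑ η for some t ∈ λ^{<ω} ∖ S}, with relations E_n((η,i),(ν,j)) iff η↾n = ν↾n. Define Tr(M) = {s ∈ λ^{<ω} : for all α < λ there is η ∈ λ^ω with s⌢(α) ⊑ η and (η,1) ∉ M}. Then for every subtree S ⊆ λ^{<ω}, Tr(M_S) = S. -/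
/-- `s` is an initial segment of the infinite sequence `η`. -/
def prefixOf {α : Type*} (s : List α) (η : ℕ → α) : Prop :=
  ∀ i : Fin s.length, η i = s.get i

/-- The structure `M_S`: the eventually-zero sequences tagged `0`, together with pairs
`(η, 1)` for branches `η` extending `t⌢(1)` for some node `t ∉ S`. Here `z` plays the role
of `0 ∈ λ` and `o` the role of `1 ∈ λ`. -/
def MS {α : Type*} (z o : α) (S : Set (List α)) : Set ((ℕ → α) × ℕ) :=
  {p | (p.2 = 0 ∧ ∃ N, ∀ n, N ≤ n → p.1 n = z) ∨
       (p.2 = 1 ∧ ∃ t : List α, t ∉ S ∧ prefixOf (t ++ [o]) p.1)}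

/-- The tree recovered from a structure `M`:
`Tr(M) = {s : for all α there is η ⊒ s⌢(α) with (η,1) ∉ M}`. -/
def Tr {α : Type*} (M : Set ((ℕ → α) × ℕ)) : Set (List α) :=
  {s | ∀ a : α, ∃ η : ℕ → α, prefixOf (s ++ [a]) η ∧ (η, 1) ∉ M}

/-!
If `s ∉ S`, every branch through `s⌢(1)` is tagged `1` in `M_S`, so `s ∉ Tr(M_S)`. Conversely,
for `s ∈ S` and any `α`, the branch `s⌢(α)⌢(0,0,…)` is not tagged `1`: a node `t⌢(1)` on it
must lie inside `s⌢(α)`, since the branch is `0 ≠ 1` from there on, so `t ⊑ s` and `t ∈ S`.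
-/

section

variable {α : Type*}

theorem prefixOf_getD (u : List α) (z : α) : prefixOf u (u.getD · z) :=
  fun i => List.getD_eq_getElem u z i.isLt

theorem length_lt_of_prefixOf_concat_getD {u t : List α} {z o : α} (hzo : z ≠ o)
    (h : prefixOf (t ++ [o]) (u.getD · z)) : t.length < u.length := by
  by_contra! hlen
  have hlast : u.getD t.length z = o := by simpa using h ⟨t.length, by simp⟩
  exact hzo (by rwa [List.getD_eq_default _ _ hlen] at hlast)

theorem isPrefix_of_prefixOf_getD {u l : List α} {z : α} (h : prefixOf l (u.getD · z))
    (hlen : l.length ≤ u.length) : l <+: u := by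
  rw [List.prefix_iff_eq_take]
  refine List.ext_getElem (by simp [hlen]) fun i hi _ => ?_
  have hi' : i < u.length := by omega
  have hi_eq : u.getD i z = l[i] := h ⟨i, hi⟩
  rw [List.getD_eq_getElem u z hi'] at hi_eq
  simp [hi_eq]

theorem Tr_MS_subset (z o : α) (S : Set (List α)) : Tr (MS z o S) ⊆ S := by
  intro s hs
  by_contra hsS
  obtain ⟨η, hpre, hη⟩ := hs o
  exact hη (Or.inr ⟨rfl, s, hsS, hpre⟩)

theorem isPrefix_of_prefixOf_concat_getD {z o : α} (hzo : z ≠ o) {s t : List α}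
    {a : α} (h : prefixOf (t ++ [o]) ((s ++ [a]).getD · z)) : t <+: s := by
  have hlen := length_lt_of_prefixOf_concat_getD hzo h
  have hts : t ++ [o] <+: s ++ [a] := isPrefix_of_prefixOf_getD h (by simpa using hlen)
  exact List.prefix_of_prefix_length_le ((List.prefix_append t [o]).trans hts)
    (List.prefix_append s [a]) (by simpa using hlen)

theorem mem_Tr_MS {z o : α} (hzo : z ≠ o) {S : Set (List α)}
    (hScl : ∀ s t : List α, s <+: t → t ∈ S → s ∈ S) {s : List α} (hs : s ∈ S) :
    s ∈ Tr (MS z o S) := by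
  intro a
  refine ⟨((s ++ [a]).getD · z), prefixOf_getD _ _, ?_⟩
  rintro (⟨h10, -⟩ | ⟨-, t, htS, ht⟩)
  · exact one_ne_zero h10
  · exact htS (hScl t s (isPrefix_of_prefixOf_concat_getD hzo ht) hs)

end

theorem stmt16_general {α : Type*} (z o : α) (hzo : z ≠ o)
    (S : Set (List α))
    (hScl : ∀ s t : List α, s <+: t → t ∈ S → s ∈ S) :
    Tr (MS z o S) = S :=
  (Tr_MS_subset z o S).antisymm fun _ hs => mem_Tr_MS hzo hScl hs

/-- For every subtree `S ⊆ λ^{<ω}` (with `λ` infinite), `Tr(M_S) = S`. -/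
theorem stmt16 {α : Type*} [Infinite α] (z o : α) (hzo : z ≠ o)
    (S : Set (List α)) (hS0 : ([] : List α) ∈ S)
    (hScl : ∀ s t : List α, s <+: t → t ∈ S → s ∈ S) :
    Tr (MS z o S) = S :=
  stmt16_general z o hzo S hScl
end
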